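/- Consider a nearest-neighbor Markov chain on ℤ with transition probabilities P(x, x+1) = ω_x ∈ (0,1) and P(x, x−1) = 1−ω_x, started at 0, and let T_k be the hitting time of site k. Define modified environments ω⁻ and ω⁺ agreeing with ω off 0 and with ω⁻₀ = 0 (reflection left) and ω⁺₀ = 1 (reflection right). Then for every m ≥ 1 and n ≥ 1, P_ω(max_{k ≤ n} |X_k| < m) ≥ P_{ω⁻}(T_{−m} > n) · P_{ω⁺}(T_m > n). -/

import Mathlib

/-!
Let `S_n(ω, P, y)` be the probability that the walk from `y` stays in `P` up to time `n`; it
satisfies the one-step recursion `S_{n+1}(y) = ω_y S_n(y+1) + (1-ω_y) S_n(y-1)` for `P y`, and is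
nonincreasing in `n`. With `A = S(ω⁻, · ≠ -m)`, `B = S(ω⁺, · ≠ m)` and `G = S(ω, |·| < m)` one shows
by induction on `n` that `B_n(s) A_n(0) ≤ G_n(s)` for `0 ≤ s ≤ m`, simultaneously for all
environments. Away from `0` this is the recursion together with `A_{n+1}(0) ≤ A_n(0)`. At `0` the
reflected walks move deterministically, so `B_{n+1}(0) A_{n+1}(0) = B_n(1) A_n(-1)`, which is
bounded both by `G_n(1)` and, through the mirror image `x ↦ -x`, `ω ↦ 1 - ω(-·)` of the
induction hypothesis, by `G_n(-1)`.
-/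

/-- Transition weight of a nearest-neighbor walk on `ℤ` in environment `ω`:
step from `a` to `a+1` with probability `ω a`, to `a-1` with probability `1 - ω a`. -/
noncomputable def stepW (ω : ℤ → ℝ) (a b : ℤ) : ℝ :=
  if b = a + 1 then ω a else if b = a - 1 then 1 - ω a else 0

/-- Quenched probability that a path of length `N` starting at `y` occurs. -/
noncomputable def pathWeight (ω : ℤ → ℝ) (y : ℤ) {N : ℕ} (x : Fin (N + 1) → ℤ) : ℝ :=
  if x 0 = y then ∏ k : Fin N, stepW ω (x k.castSucc) (x k.succ) else 0

/-- Quenched probability (for the walk started at `y` in environment `ω`) of an event `A`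
depending on the first `N` steps of the walk. -/
noncomputable def quenchedProb (ω : ℤ → ℝ) (y : ℤ) (N : ℕ)
    (A : Set (Fin (N + 1) → ℤ)) : ℝ :=
  ∑' x : A, pathWeight ω y (x : Fin (N + 1) → ℤ)

open Set Function

open Classical in
noncomputable def survivalProb (ω : ℤ → ℝ) (P : ℤ → Prop) : ℕ → ℤ → ℝ
  | 0, y => if P y then 1 else 0
  | n + 1, y =>
    if P y then ω y * survivalProb ω P n (y + 1) + (1 - ω y) * survivalProb ω P n (y - 1) else 0

open Classical in
lemma survivalProb_zero (ω : ℤ → ℝ) (P : ℤ → Prop) (y : ℤ) :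
    survivalProb ω P 0 y = if P y then 1 else 0 := rfl

open Classical in
lemma survivalProb_succ (ω : ℤ → ℝ) (P : ℤ → Prop) (n : ℕ) (y : ℤ) :
    survivalProb ω P (n + 1) y =
      if P y then ω y * survivalProb ω P n (y + 1) + (1 - ω y) * survivalProb ω P n (y - 1)
      else 0 := rfl

section PathSums

variable (ω : ℤ → ℝ) {N : ℕ}

lemma pathWeight_cons (y z : ℤ) (t : Fin (N + 1) → ℤ) :
    pathWeight ω y (Fin.cons z t : Fin (N + 2) → ℤ) =
      if z = y then stepW ω y (t 0) * pathWeight ω (t 0) t else 0 := by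
  unfold pathWeight
  split_ifs with hz <;> simp_all [Fin.prod_univ_succ]

lemma stepW_mul_pathWeight (y : ℤ) (t : Fin (N + 1) → ℤ) :
    stepW ω y (t 0) * pathWeight ω (t 0) t =
      ω y * pathWeight ω (y + 1) t + (1 - ω y) * pathWeight ω (y - 1) t := by
  unfold stepW pathWeight
  rw [if_pos rfl]
  split_ifs <;> first | omega | ring

open Classical in
lemma indicator_pathWeight_cons (P : ℤ → Prop) (y : ℤ) (t : Fin (N + 1) → ℤ) :
    {x | ∀ k, P (x k)}.indicator (pathWeight ω y) (Fin.cons y t : Fin (N + 2) → ℤ) =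
      if P y then
        ω y * {x | ∀ k, P (x k)}.indicator (pathWeight ω (y + 1)) t +
          (1 - ω y) * {x | ∀ k, P (x k)}.indicator (pathWeight ω (y - 1)) t
      else 0 := by
  have hmem : (∀ k, P ((Fin.cons y t : Fin (N + 2) → ℤ) k)) ↔ P y ∧ ∀ k, P (t k) := by
    simp [Fin.forall_fin_succ]
  simp only [indicator_apply, mem_ofPred_eq, hmem, pathWeight_cons, stepW_mul_pathWeight]
  by_cases hy : P y <;> by_cases ht : ∀ k, P (t k) <;> simp [hy, ht]

lemma hasSum_indicator_pathWeight (P : ℤ → Prop) (N : ℕ) (y : ℤ) :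
    HasSum ({x : Fin (N + 1) → ℤ | ∀ k, P (x k)}.indicator (pathWeight ω y))
      (survivalProb ω P N y) := by
  induction N generalizing y with
  | zero =>
    convert hasSum_single (fun _ => y : Fin 1 → ℤ) fun x hx => ?_
    · by_cases hy : P y <;> simp [hy, survivalProb, pathWeight]
    · refine indicator_apply_eq_zero.2 fun _ => if_neg fun h0 => hx ?_
      exact funext fun k => Subsingleton.elim k 0 ▸ h0
  | succ N ih =>
    have hsupp : ∀ x ∉ range fun t : Fin (N + 1) → ℤ => (Fin.cons y t : Fin (N + 2) → ℤ),
        {x : Fin (N + 2) → ℤ | ∀ k, P (x k)}.indicator (pathWeight ω y) x = 0 := by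
      intro x hx
      refine indicator_apply_eq_zero.2 fun _ => ?_
      rw [← Fin.cons_self_tail x, pathWeight_cons, if_neg]
      rintro rfl
      exact hx ⟨Fin.tail x, Fin.cons_self_tail x⟩
    rw [← (Fin.cons_right_injective (α := fun _ => ℤ) y).hasSum_iff hsupp]
    simp only [comp_def, indicator_pathWeight_cons, survivalProb]
    split_ifs
    · exact ((ih _).mul_left _).add ((ih _).mul_left _)
    · exact hasSum_zero

end PathSums

lemma quenchedProb_eq_survivalProb (ω : ℤ → ℝ) (P : ℤ → Prop) (N : ℕ) (y : ℤ) :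
    quenchedProb ω y N {x | ∀ k, P (x k)} = survivalProb ω P N y := by
  rw [quenchedProb, tsum_subtype, (hasSum_indicator_pathWeight ω P N y).tsum_eq]

lemma convexComb_le_convexComb {p a b a' b' : ℝ} (hp : p ∈ Icc 0 1) (ha : a ≤ a') (hb : b ≤ b') :
    p * a + (1 - p) * b ≤ p * a' + (1 - p) * b' :=
  add_le_add (mul_le_mul_of_nonneg_left ha hp.1) (mul_le_mul_of_nonneg_left hb (sub_nonneg.2 hp.2))

lemma le_convexComb {p x g₁ g₂ : ℝ} (hp : p ∈ Icc 0 1) (h₁ : x ≤ g₁) (h₂ : x ≤ g₂) :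
    x ≤ p * g₁ + (1 - p) * g₂ :=
  calc x = p * x + (1 - p) * x := by ring
    _ ≤ p * g₁ + (1 - p) * g₂ := convexComb_le_convexComb hp h₁ h₂

section Survival

variable {ω : ℤ → ℝ} (P : ℤ → Prop)

lemma survivalProb_nonneg (hω : ∀ x, ω x ∈ Icc 0 1) (n : ℕ) (y : ℤ) : 0 ≤ survivalProb ω P n y := by
  induction n generalizing y with
  | zero => rw [survivalProb_zero]; split_ifs <;> norm_num
  | succ n ih =>
    rw [survivalProb_succ]
    split_ifs
    · simpa using convexComb_le_convexComb (hω y) (ih (y + 1)) (ih (y - 1))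
    · rfl

lemma survivalProb_succ_le (hω : ∀ x, ω x ∈ Icc 0 1) (n : ℕ) (y : ℤ) :
    survivalProb ω P (n + 1) y ≤ survivalProb ω P n y := by
  induction n generalizing y with
  | zero =>
    have hle : ∀ z, survivalProb ω P 0 z ≤ 1 := fun z => by
      rw [survivalProb_zero]; split_ifs <;> norm_num
    rw [survivalProb_succ, survivalProb_zero ω P y]
    split_ifs
    · simpa using convexComb_le_convexComb (hω y) (hle (y + 1)) (hle (y - 1))
    · rfl
  | succ n ih =>
    rw [survivalProb_succ ω P (n + 1) y, survivalProb_succ ω P n y]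
    split_ifs
    · exact convexComb_le_convexComb (hω y) (ih (y + 1)) (ih (y - 1))
    · rfl

end Survival

lemma update_mem_Icc {ω : ℤ → ℝ} (hω : ∀ x, ω x ∈ Icc 0 1) {v : ℝ} (hv : v ∈ Icc 0 1) (x : ℤ) :
    update ω 0 v x ∈ Icc 0 1 :=
  (forall_update_iff ω fun _ v => v ∈ Icc 0 1).2 ⟨hv, fun x _ => hω x⟩ x

def reflectEnv (ω : ℤ → ℝ) : ℤ → ℝ := fun x => 1 - ω (-x)

lemma reflectEnv_mem_Icc {ω : ℤ → ℝ} (hω : ∀ x, ω x ∈ Icc 0 1) (x : ℤ) :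
    reflectEnv ω x ∈ Icc 0 1 := by
  simpa [reflectEnv, and_comm] using hω (-x)

lemma update_reflectEnv (ω : ℤ → ℝ) (v : ℝ) :
    update (reflectEnv ω) 0 v = reflectEnv (update ω 0 (1 - v)) := by
  funext x
  by_cases hx : x = 0 <;> simp [reflectEnv, hx]

lemma survivalProb_reflectEnv (ω : ℤ → ℝ) (P : ℤ → Prop) (n : ℕ) (s : ℤ) :
    survivalProb (reflectEnv ω) P n s = survivalProb ω (fun y => P (-y)) n (-s) := by
  induction n generalizing s with
  | zero => rw [survivalProb_zero, survivalProb_zero, neg_neg]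
  | succ n ih =>
    rw [survivalProb_succ, survivalProb_succ, ih, ih, neg_neg, reflectEnv, neg_add', neg_sub',
      sub_neg_eq_add]
    split_ifs <;> ring

lemma survivalProb_update_one_mul_le_succ_zero {m : ℤ} (hm : 0 < m) {n : ℕ} {ω : ℤ → ℝ}
    (hω : ∀ x, ω x ∈ Icc 0 1)
    (right : survivalProb (update ω 0 1) (· ≠ m) n 1 * survivalProb (update ω 0 0) (· ≠ -m) n 0 ≤
      survivalProb ω (|·| < m) n 1)
    (left : survivalProb (update ω 0 0) (· ≠ -m) n (-1) * survivalProb (update ω 0 1) (· ≠ m) n 0 ≤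
      survivalProb ω (|·| < m) n (-1)) :
    survivalProb (update ω 0 1) (· ≠ m) (n + 1) 0 *
        survivalProb (update ω 0 0) (· ≠ -m) (n + 1) 0 ≤
      survivalProb ω (|·| < m) (n + 1) 0 := by
  have hω₁ := update_mem_Icc hω (v := 1) (by norm_num)
  have hω₀ := update_mem_Icc hω (v := 0) (by norm_num)
  have hA₀ : survivalProb (update ω 0 0) (· ≠ -m) (n + 1) 0 =
      survivalProb (update ω 0 0) (· ≠ -m) n (-1) := by
    simp [survivalProb_succ, hm.ne']
  have hB₀ : survivalProb (update ω 0 1) (· ≠ m) (n + 1) 0 =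
      survivalProb (update ω 0 1) (· ≠ m) n 1 := by
    simp [survivalProb_succ, hm.ne]
  have hA : survivalProb (update ω 0 0) (· ≠ -m) n (-1) ≤
      survivalProb (update ω 0 0) (· ≠ -m) n 0 := hA₀ ▸ survivalProb_succ_le _ hω₀ n 0
  have hB : survivalProb (update ω 0 1) (· ≠ m) n 1 ≤
      survivalProb (update ω 0 1) (· ≠ m) n 0 := hB₀ ▸ survivalProb_succ_le _ hω₁ n 0
  rw [hA₀, hB₀, survivalProb_succ ω _ n 0, if_pos (by simpa using hm), zero_add, zero_sub]
  refine le_convexComb (hω 0) (le_trans ?_ right) (le_trans ?_ left)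
  · exact mul_le_mul_of_nonneg_left hA (survivalProb_nonneg _ hω₁ _ _)
  · rw [mul_comm]
    exact mul_le_mul_of_nonneg_left hB (survivalProb_nonneg _ hω₀ _ _)

theorem survivalProb_update_one_mul_le (m : ℤ) (n : ℕ) {ω : ℤ → ℝ} (hω : ∀ x, ω x ∈ Icc 0 1)
    {s : ℤ} (hs₀ : 0 ≤ s) (hsm : s ≤ m) :
    survivalProb (update ω 0 1) (· ≠ m) n s * survivalProb (update ω 0 0) (· ≠ -m) n 0 ≤
      survivalProb ω (|·| < m) n s := by
  induction n generalizing ω s with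
  | zero =>
    simp only [survivalProb_zero, abs_of_nonneg hs₀]
    split_ifs <;> first | omega | norm_num
  | succ n ih =>
    rcases hsm.eq_or_lt with hsm | hsm
    · rw [hsm, survivalProb_succ, if_neg (not_not.2 rfl), zero_mul]
      exact survivalProb_nonneg _ hω _ _
    rcases hs₀.eq_or_lt with rfl | hs₀
    · refine survivalProb_update_one_mul_le_succ_zero hsm hω (ih hω zero_le_one (by omega)) ?_
      simpa [update_reflectEnv, survivalProb_reflectEnv, neg_eq_iff_eq_neg] using
        ih (reflectEnv_mem_Icc hω) zero_le_one (by omega)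
    set A := survivalProb (update ω 0 0) (· ≠ -m)
    set B := survivalProb (update ω 0 1) (· ≠ m)
    set G := survivalProb ω (|·| < m)
    have hA : A (n + 1) 0 ≤ A n 0 := survivalProb_succ_le _ (update_mem_Icc hω (by norm_num)) n 0
    have hB : B (n + 1) s = ω s * B n (s + 1) + (1 - ω s) * B n (s - 1) := by
      simp [B, survivalProb_succ, hsm.ne, hs₀.ne']
    have hG : G (n + 1) s = ω s * G n (s + 1) + (1 - ω s) * G n (s - 1) := by
      simp [G, survivalProb_succ, abs_of_pos hs₀, hsm]
    calc B (n + 1) s * A (n + 1) 0 ≤ B (n + 1) s * A n 0 :=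
          mul_le_mul_of_nonneg_left hA (survivalProb_nonneg _ (update_mem_Icc hω (by norm_num)) _ _)
      _ = ω s * (B n (s + 1) * A n 0) + (1 - ω s) * (B n (s - 1) * A n 0) := by rw [hB]; ring
      _ ≤ ω s * G n (s + 1) + (1 - ω s) * G n (s - 1) :=
        convexComb_le_convexComb (hω s) (ih hω (by omega) (by omega)) (ih hω (by omega) (by omega))
      _ = G (n + 1) s := hG.symm

theorem stmt15_general (ω : ℤ → ℝ) (hω : ∀ x, ω x ∈ Set.Ioo (0:ℝ) 1) (m n : ℕ) :
    quenchedProb ω 0 n {x | ∀ k, |x k| < (m : ℤ)} ≥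
      quenchedProb (Function.update ω 0 0) 0 n {x | ∀ k, x k ≠ -(m : ℤ)} *
        quenchedProb (Function.update ω 0 1) 0 n {x | ∀ k, x k ≠ (m : ℤ)} := by
  rw [ge_iff_le, quenchedProb_eq_survivalProb ω (|·| < (m : ℤ)),
    quenchedProb_eq_survivalProb _ (· ≠ -(m : ℤ)), quenchedProb_eq_survivalProb _ (· ≠ (m : ℤ)),
    mul_comm]
  exact survivalProb_update_one_mul_le m n (fun x => Ioo_subset_Icc_self (hω x)) le_rfl
    (Nat.cast_nonneg m)

/-- For a nearest-neighbor walk in environment `ω` started at `0`, with `ω⁻` and `ω⁺`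
the environments reflected leftward/rightward at `0` (`ω⁻₀ = 0`, `ω⁺₀ = 1`), the probability
of staying in `(-m, m)` for `n` steps is at least
`P_{ω⁻}(T_{-m} > n) · P_{ω⁺}(T_m > n)`. -/
theorem stmt15 (ω : ℤ → ℝ) (hω : ∀ x, ω x ∈ Set.Ioo (0:ℝ) 1) (m n : ℕ)
    (hm : 1 ≤ m) (hn : 1 ≤ n) :
    quenchedProb ω 0 n {x | ∀ k, |x k| < (m : ℤ)} ≥
      quenchedProb (Function.update ω 0 0) 0 n {x | ∀ k, x k ≠ -(m : ℤ)} *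
        quenchedProb (Function.update ω 0 1) 0 n {x | ∀ k, x k ≠ (m : ℤ)} :=
  stmt15_general ω hω m n
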